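/- Let Γ be a connected graph with first Betti number g and n leaves, m ≥ 2. The number of degree-one elements of the phylogenetic semigroup R_Γ(Z/mZ) (labelings of the edges of the split forest Γ̂ by elements of Z/mZ with the local zero-sum condition at each internal vertex and dual labels on split edge pairs) equals m^{g + n − 1} when Γ is trivalent. -/

import Mathlib

/-!
The labelings obeying the first two conditions are the 1-chains of `G` with coefficients in
`ℤ/mℤ`: antisymmetric functions on darts, one free value per edge, so there are `m ^ |E|` of them.
The third condition asks the divergence `v ↦ ∑_{u ~ v} ℓ v u` to vanish at the internal vertices.
On a connected graph the divergence can be prescribed arbitrarily away from one vertex, by pushing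
the required amount from each vertex along a walk to it; taking that vertex to be a leaf, the
divergence onto `(ℤ/mℤ)^I`, `I` the number of internal vertices, is surjective, and its kernel
has `m ^ (|E| - I)` elements. Finally `|E| + 1 = |V| + g` and `|V| = I + n` give
`|E| - I = g + n - 1`.
-/

open Finset

theorem AddMonoidHom.card_ker_mul_card_of_surjective {A B : Type*} [AddGroup A] [AddGroup B]
    (f : A →+ B) (hf : Function.Surjective f) : Nat.card f.ker * Nat.card B = Nat.card A := by
  rw [← AddSubgroup.card_top (G := B), ← f.range_eq_top_of_surjective hf, ← AddSubgroup.index_ker,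
    AddSubgroup.card_mul_index]

namespace SimpleGraph

variable {V : Type*} (G : SimpleGraph V) (R : Type*) [AddCommGroup R]

def oneChains : AddSubgroup (V → V → R) where
  carrier := {ℓ | (∀ v u, ¬ G.Adj v u → ℓ v u = 0) ∧ ∀ v u, ℓ v u = -ℓ u v}
  zero_mem' := ⟨fun _ _ _ => rfl, fun _ _ => neg_zero.symm⟩
  add_mem' := fun ⟨ha₀, ha⟩ ⟨hb₀, hb⟩ =>
    ⟨fun v u h => by simp [ha₀ v u h, hb₀ v u h], fun v u => by simp [ha v u, hb v u, add_comm]⟩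
  neg_mem' := fun ⟨ha₀, ha⟩ =>
    ⟨fun v u h => by simp [ha₀ v u h], fun v u => by simp [ha v u]⟩

variable {G R}

def oneChainsEquiv [LinearOrder V] [DecidableRel G.Adj] : G.oneChains R ≃ (G.edgeSet → R) where
  toFun ℓ e := ℓ.1 e.1.inf e.1.sup
  invFun f := ⟨fun v u => if h : G.Adj v u then
      (if v < u then f ⟨s(v, u), h⟩ else -f ⟨s(v, u), h⟩) else 0, by
    refine ⟨fun v u h => dif_neg h, fun v u => ?_⟩
    by_cases h : G.Adj v u
    · rcases lt_or_gt_of_ne h.ne with hvu | huv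
      · simp [h, h.symm, hvu, hvu.not_gt, Sym2.eq_swap]
      · simp [h, h.symm, huv, huv.not_gt, Sym2.eq_swap]
    · have h' : ¬ G.Adj u v := fun h' => h h'.symm
      simp [h, h']⟩
  left_inv ℓ := by
    obtain ⟨h₀, hneg⟩ := ℓ.2
    ext v u
    by_cases h : G.Adj v u
    · rcases lt_or_gt_of_ne h.ne with hvu | huv
      · simp [h, hvu, hvu.le]
      · simp [h, huv.not_gt, huv.le, hneg u v]
    · simp [h, h₀ v u h]
  right_inv f := by
    funext ⟨e, he⟩
    induction e using Sym2.ind with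
    | _ a b =>
      have h : G.Adj a b := he
      rcases lt_or_gt_of_ne h.ne with hab | hba
      · simp [h, hab, hab.le]
      · simp [h.symm, hba, hba.le, Sym2.eq_swap]

theorem card_oneChains [Fintype V] [DecidableRel G.Adj] :
    Nat.card (G.oneChains R) = Nat.card R ^ #G.edgeFinset := by
  let : LinearOrder V := LinearOrder.lift' _ (Fintype.equivFin V).injective
  rw [Nat.card_congr oneChainsEquiv, Nat.card_fun, Nat.card_eq_fintype_card (α := G.edgeSet),
    card_edgeSet]

variable [DecidableEq V]

def arcChain (a c : V) (r : R) : V → V → R :=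
  Pi.single a (Pi.single c r) - Pi.single c (Pi.single a r)

theorem arcChain_mem_oneChains {a c : V} (h : G.Adj a c) (r : R) :
    arcChain a c r ∈ G.oneChains R := by
  refine ⟨fun v u hvu => ?_, fun v u => ?_⟩
  · have h₁ : ¬ (v = a ∧ u = c) := fun ⟨hv, hu⟩ => hvu (hv ▸ hu ▸ h)
    have h₂ : ¬ (v = c ∧ u = a) := fun ⟨hv, hu⟩ => hvu (hv ▸ hu ▸ h.symm)
    simp only [arcChain, Pi.sub_apply, Pi.single_apply]
    split_ifs <;> simp_all
  · simp only [arcChain, Pi.sub_apply, Pi.single_apply]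
    split_ifs <;> simp_all

def Walk.flow : {a b : V} → G.Walk a b → R → V → V → R
  | _, _, .nil, _ => 0
  | _, _, .cons (u := a) (v := c) _ p, r => arcChain a c r + p.flow r

theorem Walk.flow_mem_oneChains {a b : V} (p : G.Walk a b) (r : R) :
    p.flow r ∈ G.oneChains R := by
  induction p with
  | nil => exact zero_mem _
  | cons h p ih => exact add_mem (arcChain_mem_oneChains h r) ih

variable [Fintype V] [DecidableRel G.Adj]

variable (G R) in
def divergence : (V → V → R) →+ (V → R) where
  toFun ℓ v := ∑ u ∈ G.neighborFinset v, ℓ v u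
  map_zero' := by ext; simp
  map_add' _ _ := by ext; simp [sum_add_distrib]

theorem divergence_arcChain {a c : V} (h : G.Adj a c) (r : R) :
    G.divergence R (arcChain a c r) = Pi.single a r - Pi.single c r := by
  ext v
  simp only [divergence, arcChain, AddMonoidHom.coe_mk, ZeroHom.coe_mk, Pi.sub_apply,
    sum_sub_distrib, Pi.single_apply]
  split_ifs <;> simp_all [h.ne, h.ne', h.symm]

theorem Walk.divergence_flow {a b : V} (p : G.Walk a b) (r : R) :
    G.divergence R (p.flow r) = Pi.single a r - Pi.single b r := by
  induction p with
  | nil => simp [Walk.flow]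
  | cons h p ih => simp only [Walk.flow, map_add, divergence_arcChain h, ih]; abel

theorem Connected.exists_divergence_eq (hG : G.Connected) (u : V) (f : V → R) :
    ∃ ℓ ∈ G.oneChains R, ∀ v ≠ u, G.divergence R ℓ v = f v := by
  refine ⟨∑ w, (hG.preconnected w u).some.flow (f w),
    sum_mem fun w _ => Walk.flow_mem_oneChains _ _, fun v hv => ?_⟩
  simp [Walk.divergence_flow, Pi.single_apply, hv]

variable (G R) in
def divergenceOn (P : V → Prop) : G.oneChains R →+ ({v // P v} → R) :=
  AddMonoidHom.mk' (fun ℓ v => G.divergence R ℓ v) fun _ _ => by ext; simp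

theorem Connected.divergenceOn_surjective (hG : G.Connected) {P : V → Prop} {u : V}
    (hu : ¬ P u) : Function.Surjective (G.divergenceOn R P) := by
  classical
  intro f
  obtain ⟨ℓ, hℓ, hdiv⟩ := hG.exists_divergence_eq u fun v => if h : P v then f ⟨v, h⟩ else 0
  refine ⟨⟨ℓ, hℓ⟩, funext fun v => ?_⟩
  have hvu : v.1 ≠ u := fun h => hu (h ▸ v.2)
  simp [divergenceOn, hdiv v hvu, v.2]

theorem Connected.card_ker_divergenceOn_mul (hG : G.Connected) {P : V → Prop} {u : V}
    (hu : ¬ P u) :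
    Nat.card (G.divergenceOn R P).ker * Nat.card R ^ Nat.card {v // P v} =
      Nat.card R ^ #G.edgeFinset := by
  rw [← Nat.card_fun, (G.divergenceOn R P).card_ker_mul_card_of_surjective
    (hG.divergenceOn_surjective hu), card_oneChains]

theorem Connected.card_divergenceFreeOn_mul (hG : G.Connected) {P : V → Prop} {u : V}
    (hu : ¬ P u) :
    Nat.card {ℓ : V → V → R // (∀ v u, ¬ G.Adj v u → ℓ v u = 0) ∧ (∀ v u, ℓ v u = -ℓ u v) ∧
        ∀ v, P v → ∑ u ∈ G.neighborFinset v, ℓ v u = 0} * Nat.card R ^ Nat.card {v // P v} =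
      Nat.card R ^ #G.edgeFinset := by
  rw [← hG.card_ker_divergenceOn_mul hu]
  congr 1
  exact Nat.card_congr
    { toFun ℓ := ⟨⟨ℓ.1, ℓ.2.1, ℓ.2.2.1⟩, funext fun v => ℓ.2.2.2 v.1 v.2⟩
      invFun ℓ := ⟨ℓ.1.1, ℓ.1.2.1, ℓ.1.2.2, fun v hv => congrFun ℓ.2 ⟨v, hv⟩⟩ }

end SimpleGraph

theorem stmt19 (m g n : ℕ) (hm : 2 ≤ m) (hn : 1 ≤ n)
    (V : Type) [Fintype V] (G : SimpleGraph V) [DecidableRel G.Adj]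
    (hconn : G.Connected)
    (hdeg : ∀ v : V, G.degree v = 1 ∨ G.degree v = 3)
    (hg : G.edgeFinset.card + 1 = Fintype.card V + g)
    (hn' : (Finset.univ.filter fun v : V => G.degree v = 1).card = n) :
    Nat.card {ℓ : V → V → ZMod m //
        (∀ v u, ¬ G.Adj v u → ℓ v u = 0) ∧
        (∀ v u, ℓ v u = - ℓ u v) ∧
        (∀ v, G.degree v = 3 → ∑ u ∈ G.neighborFinset v, ℓ v u = 0)}
      = m ^ (g + n - 1) := by
  classical
  have : NeZero m := ⟨by omega⟩
  obtain ⟨leaf, hleaf⟩ : ∃ u, G.degree u = 1 := by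
    obtain ⟨u, hu⟩ := card_pos.mp (hn'.symm ▸ hn : 0 < #(univ.filter fun v => G.degree v = 1))
    exact ⟨u, (mem_filter.mp hu).2⟩
  have hcount := hconn.card_divergenceFreeOn_mul (R := ZMod m) (P := (G.degree · = 3))
    (u := leaf) (by omega)
  have hinternal : Nat.card {v // G.degree v = 3} + n = Fintype.card V := by
    have hleaves : univ.filter (¬G.degree · = 3) = univ.filter (G.degree · = 1) :=
      filter_congr fun v _ => by rcases hdeg v with h | h <;> simp [h]
    rw [Nat.card_eq_fintype_card, Fintype.card_subtype, ← hn', ← hleaves,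
      card_filter_add_card_filter_not, card_univ]
  rw [Nat.card_zmod, show #G.edgeFinset = Nat.card {v // G.degree v = 3} + (g + n - 1) by omega,
    pow_add, mul_comm] at hcount
  exact Nat.eq_of_mul_eq_mul_left (by positivity) hcount
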